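/- arXiv:1110.0760 — 2 statements merged into one kernel-verified Lean document; each statement's English description precedes it below -/
import Mathlib

section
/- Let w ∈ αΣ* ∩ Σ*‾α be non-α-crossing. Then H*_α(w) ⊆ (P_α(w) ∪ ‾(S_‾α(w)))* · w · (‾(P_α(w)) ∪ S_‾α(w))*. -/
open List

set_option linter.unusedSectionVars false

namespace Hairpin

variable {S : Type} [DecidableEq S]

/-- Antimorphic extension of an involution to words. -/
def comp (bar : S → S) (w : List S) : List S := (w.map bar).reverse

/-- Right hairpin completion w.r.t. primer `a`. -/
def RH (bar : S → S) (a w z : List S) : Prop :=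
  ∃ γ β : List S, w = γ ++ a ++ β ++ comp bar a ∧ z = w ++ comp bar γ

/-- Left hairpin completion w.r.t. primer `a`. -/
def LH (bar : S → S) (a w z : List S) : Prop :=
  ∃ γ β : List S, w = a ++ β ++ comp bar a ++ comp bar γ ∧ z = γ ++ w

/-- One hairpin completion step. -/
def HC (bar : S → S) (a w z : List S) : Prop := RH bar a w z ∨ LH bar a w z

/-- Iterated hairpin completion `H*_α(w)`. -/
def HCstar (bar : S → S) (a w : List S) : Set (List S) :=
  { z | Relation.ReflTransGen (HC bar a) w z }

/-- `w` is non-`a`-crossing: every occurrence of `a` starts no later than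
every occurrence of `comp bar a`. -/
def NonCrossing (bar : S → S) (a w : List S) : Prop :=
  ∀ i j : ℕ, a <+: w.drop i → comp bar a <+: w.drop j → i ≤ j

/-- The set of `a`-prefixes of `w`. -/
def Pa (a w : List S) : Set (List S) := { u | u ++ a <+: w }

/-- The set of `‾a`-suffixes of `w` (the elements are the words `‾v`). -/
def Sa (bar : S → S) (a w : List S) : Set (List S) :=
  { x | comp bar a ++ x <:+ w }

/-- The set of complements of `‾a`-suffixes of `w`, i.e. `‾(S_‾α(w))`. -/
def barSa (bar : S → S) (a w : List S) : Set (List S) :=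
  { v | comp bar a ++ comp bar v <:+ w }

/-- Kleene star of a set of words: all finite concatenations. -/
def star (X : Set (List S)) : Set (List S) :=
  { x | ∃ l : List (List S), (∀ y ∈ l, y ∈ X) ∧ x = l.flatten }

/-- `ind_α(x)`: the number of occurrences of `a` in `x ++ a` other than the
suffix occurrence, i.e. the number of positions `i < |x|` where `a` occurs. -/
def inda (a x : List S) : ℕ :=
  ((Finset.range x.length).filter (fun i => a <+: (x ++ a).drop i)).card

/-!
Every word reachable from `w` satisfies an invariant: it starts with `α`, ends with `‾α`, is
non-`α`-crossing, the part before any occurrence of `α` lies in `X*` and the part after any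
occurrence of `‾α` lies in `Y*`, where `X = P_α(w) ∪ ‾(S_‾α(w))` and `Y = ‾X`. A right completion
of `z = γαδ` appends `‾γ ∈ Y*`. An occurrence of `α` or `‾α` in `z‾γ` that reaches into `‾γ`
reflects, under the antimorphism, to an occurrence of `‾α` or `α` in `z` starting inside `γ`:
for `α` this contradicts non-crossing, and for `‾α` it shows that the new suffix is the complement
of a prefix of `z` ending before an `α`. Left completions are right completions of the
complemented word, and the invariant is symmetric under `‾`.
-/

theorem comp_append (bar : S → S) (u v : List S) :
    comp bar (u ++ v) = comp bar v ++ comp bar u := by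
  simp [comp]

@[simp]
theorem length_comp (bar : S → S) (u : List S) : (comp bar u).length = u.length := by
  simp [comp]

theorem comp_comp {bar : S → S} (hbar : Function.Involutive bar) (u : List S) :
    comp bar (comp bar u) = u := by
  simp [comp, List.map_reverse, hbar.comp_self]

theorem comp_suffix_comp_of_prefix {bar : S → S} {u v : List S} (h : u <+: v) :
    comp bar u <:+ comp bar v :=
  List.reverse_suffix.2 (h.map bar)

theorem comp_prefix_comp_of_suffix {bar : S → S} {u v : List S} (h : u <:+ v) :
    comp bar u <+: comp bar v :=
  List.reverse_prefix.2 (h.map bar)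

theorem comp_eq_append_append_iff {bar : S → S} (hbar : Function.Involutive bar)
    {z x y t : List S} :
    comp bar z = x ++ y ++ t ↔ z = comp bar t ++ comp bar y ++ comp bar x := by
  constructor
  · intro h
    rw [← comp_comp hbar z, h]
    simp [comp_append]
  · rintro rfl
    simp [comp_append, comp_comp hbar]

theorem exists_eq_append_of_append_eq {x y u p v : List S} (h : x ++ y = u ++ p ++ v)
    (hle : u.length + p.length ≤ x.length) : ∃ v', x = u ++ p ++ v' ∧ v = v' ++ y := by
  rcases List.append_eq_append_iff.1 h.symm with ⟨v', hx, hv⟩ | ⟨r, hup, hy⟩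
  · exact ⟨v', hx, hv⟩
  · have hr : r.length = 0 := by
      have := congrArg List.length hup
      simp only [List.length_append] at this
      omega
    obtain rfl := List.eq_nil_of_length_eq_zero hr
    exact ⟨[], by simpa using hup.symm, by simpa using hy.symm⟩

theorem nil_mem_star (X : Set (List S)) : [] ∈ star X := ⟨[], by simp, rfl⟩

theorem mem_star_of_mem {X : Set (List S)} {u : List S} (h : u ∈ X) : u ∈ star X :=
  ⟨[u], by simpa using h, by simp⟩

theorem append_mem_star {X : Set (List S)} {x y : List S} (hx : x ∈ star X) (hy : y ∈ star X) :
    x ++ y ∈ star X := by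
  obtain ⟨l, hl, rfl⟩ := hx
  obtain ⟨m, hm, rfl⟩ := hy
  refine ⟨l ++ m, fun u hu => ?_, by simp⟩
  rcases List.mem_append.1 hu with h | h
  exacts [hl u h, hm u h]

theorem comp_mem_star_image {bar : S → S} {X : Set (List S)} {x : List S} (hx : x ∈ star X) :
    comp bar x ∈ star (comp bar '' X) := by
  obtain ⟨l, hl, rfl⟩ := hx
  induction l with
  | nil => exact nil_mem_star _
  | cons u l ih =>
    rw [List.flatten_cons, comp_append]
    exact append_mem_star (ih fun y hy => hl y (by simp [hy]))
      (mem_star_of_mem ⟨u, hl u (by simp), rfl⟩)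

theorem suffix_append_of_mem_star {s v t : List S} {Y : Set (List S)}
    (hY : ∀ u ∈ Y, s <:+ s ++ u) (hv : s <:+ v) (ht : t ∈ star Y) : s <:+ v ++ t := by
  obtain ⟨l, hl, rfl⟩ := ht
  induction l generalizing v with
  | nil => simpa using hv
  | cons u l ih =>
    obtain ⟨r, rfl⟩ := hv
    have hsu : s <:+ r ++ s ++ u := (hY u (hl u (by simp))).trans ⟨r, by simp⟩
    simpa using ih hsu fun y hy => hl y (by simp [hy])

def leftFactors (bar : S → S) (a w : List S) : Set (List S) := Pa a w ∪ barSa bar a w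

def rightFactors (bar : S → S) (a w : List S) : Set (List S) := comp bar '' Pa a w ∪ Sa bar a w

section Factors

variable {bar : S → S} {a w : List S}

theorem image_comp_leftFactors (hbar : Function.Involutive bar) :
    comp bar '' leftFactors bar a w = rightFactors bar a w := by
  have hS : comp bar '' barSa bar a w = Sa bar a w := by
    ext x
    constructor
    · rintro ⟨v, hv, rfl⟩
      exact hv
    · intro hx
      exact ⟨comp bar x, by simpa [barSa, Sa, comp_comp hbar] using hx, comp_comp hbar x⟩
  rw [leftFactors, Set.image_union, hS]
  rfl

theorem image_comp_rightFactors (hbar : Function.Involutive bar) :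
    comp bar '' rightFactors bar a w = leftFactors bar a w := by
  rw [← image_comp_leftFactors hbar, Set.image_image]
  simp [comp_comp hbar]

theorem comp_mem_star_rightFactors_iff (hbar : Function.Involutive bar) {x : List S} :
    comp bar x ∈ star (rightFactors bar a w) ↔ x ∈ star (leftFactors bar a w) := by
  constructor <;> intro hx
  · simpa [comp_comp hbar, image_comp_rightFactors hbar] using comp_mem_star_image (bar := bar) hx
  · simpa [image_comp_leftFactors hbar] using comp_mem_star_image (bar := bar) hx

theorem comp_mem_star_leftFactors_iff (hbar : Function.Involutive bar) {x : List S} :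
    comp bar x ∈ star (leftFactors bar a w) ↔ x ∈ star (rightFactors bar a w) := by
  rw [← comp_mem_star_rightFactors_iff hbar, comp_comp hbar]

theorem suffix_comp_append_of_mem_rightFactors (hp : a <+: w) (hs : comp bar a <:+ w)
    {u : List S} (hu : u ∈ rightFactors bar a w) : comp bar a <:+ comp bar a ++ u := by
  rcases hu with ⟨p, hpa, rfl⟩ | hu
  · have h : comp bar a ++ comp bar p <:+ comp bar w := by
      simpa [comp_append] using comp_suffix_comp_of_prefix (bar := bar) hpa
    exact List.suffix_of_suffix_length_le (comp_suffix_comp_of_prefix hp) h (by simp)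
  · exact List.suffix_of_suffix_length_le hs hu (by simp)

end Factors

theorem comp_prefix_of_length_lt {bar : S → S} (hbar : Function.Involutive bar)
    {a z γ u p v : List S} (hsuf : comp bar a <:+ z) (hocc : z ++ comp bar γ = u ++ p ++ v)
    (hp : p.length ≤ a.length) (hpast : z.length < u.length + p.length) :
    comp bar v ++ comp bar p <+: γ ++ a := by
  have hcomp : γ ++ comp bar z = comp bar v ++ comp bar p ++ comp bar u := by
    simpa [comp_append, comp_comp hbar] using congrArg (comp bar) hocc
  have ha : a <+: comp bar z := by
    simpa [comp_comp hbar] using comp_prefix_comp_of_suffix (bar := bar) hsuf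
  have hlen := congrArg List.length hocc
  simp only [List.length_append, length_comp] at hlen
  exact List.prefix_of_prefix_length_le ⟨comp bar u, hcomp.symm⟩
    ((List.prefix_append_right_inj γ).2 ha) (by simp only [List.length_append, length_comp]; omega)

structure CompletionInvariant (bar : S → S) (a w z : List S) : Prop where
  isPrefix : a <+: z
  isSuffix : comp bar a <:+ z
  nonCrossing : ∀ γ₁ δ₁ γ₂ δ₂ : List S, z = γ₁ ++ a ++ δ₁ → z = γ₂ ++ comp bar a ++ δ₂ →
    γ₁.length ≤ γ₂.length
  left_mem : ∀ γ δ : List S, z = γ ++ a ++ δ → γ ∈ star (leftFactors bar a w)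
  right_mem : ∀ γ δ : List S, z = γ ++ comp bar a ++ δ → δ ∈ star (rightFactors bar a w)

theorem completionInvariant_comp {bar : S → S} (hbar : Function.Involutive bar) {a w z : List S}
    (hI : CompletionInvariant bar a w z) :
    CompletionInvariant bar a w (comp bar z) where
  isPrefix := by simpa [comp_comp hbar] using comp_prefix_comp_of_suffix (bar := bar) hI.isSuffix
  isSuffix := comp_suffix_comp_of_prefix hI.isPrefix
  nonCrossing _ _ _ _ h₁ h₂ := by
    rw [comp_eq_append_append_iff hbar] at h₁ h₂
    rw [comp_comp hbar] at h₂
    have hle := hI.nonCrossing _ _ _ _ h₂ h₁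
    have l₁ := congrArg List.length h₁
    have l₂ := congrArg List.length h₂
    simp only [List.length_append, length_comp] at hle l₁ l₂
    omega
  left_mem _ _ h :=
    (comp_mem_star_rightFactors_iff hbar).1
      (hI.right_mem _ _ ((comp_eq_append_append_iff hbar).1 h))
  right_mem _ _ h :=
    (comp_mem_star_leftFactors_iff hbar).1
      (hI.left_mem _ _ (by simpa [comp_comp hbar] using (comp_eq_append_append_iff hbar).1 h))

theorem RH_comp_of_LH {bar : S → S} (hbar : Function.Involutive bar) {a z z' : List S}
    (h : LH bar a z z') : RH bar a (comp bar z) (comp bar z') := by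
  obtain ⟨γ, β, rfl, rfl⟩ := h
  exact ⟨γ, comp bar β, by simp [comp_append, comp_comp hbar], by simp [comp_append]⟩

namespace CompletionInvariant

variable {bar : S → S} {a w z : List S}

theorem self (hp : a <+: w) (hs : comp bar a <:+ w) (hnc : NonCrossing bar a w) :
    CompletionInvariant bar a w w where
  isPrefix := hp
  isSuffix := hs
  nonCrossing _ _ _ _ h₁ h₂ := hnc _ _ (by rw [h₁]; simp) (by rw [h₂]; simp)
  left_mem _ δ h := mem_star_of_mem (Or.inl ⟨δ, by rw [h, List.append_assoc]⟩)
  right_mem γ _ h := mem_star_of_mem (Or.inr ⟨γ, by rw [h, List.append_assoc]⟩)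

theorem append_comp (hbar : Function.Involutive bar) (hp : a <+: w) (hs : comp bar a <:+ w)
    (hI : CompletionInvariant bar a w z) {γ δ : List S} (hz : z = γ ++ a ++ δ) :
    CompletionInvariant bar a w (z ++ comp bar γ) := by
  have hγ : comp bar γ ∈ star (rightFactors bar a w) :=
    (comp_mem_star_rightFactors_iff hbar).2 (hI.left_mem γ δ hz)
  have hzlen := congrArg List.length hz
  simp only [List.length_append] at hzlen
  have hinside : ∀ γ₁ δ₁, z ++ comp bar γ = γ₁ ++ a ++ δ₁ → ∃ δ₁', z = γ₁ ++ a ++ δ₁' := by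
    intro γ₁ δ₁ h
    by_cases hle : γ₁.length + a.length ≤ z.length
    · obtain ⟨δ₁', h', -⟩ := exists_eq_append_of_append_eq h hle
      exact ⟨δ₁', h'⟩
    · -- the reflected occurrence is a `‾α` in `z` starting before the `α` after `γ`
      obtain ⟨τ, hτ⟩ := comp_prefix_of_length_lt hbar hI.isSuffix h le_rfl (by omega)
      have hle' := hI.nonCrossing γ δ (comp bar δ₁) (τ ++ δ) hz (by rw [hz, ← hτ]; simp)
      have hlen := congrArg List.length h
      simp only [List.length_append, length_comp] at hle' hlen
      omega
  refine ⟨hI.isPrefix.trans (List.prefix_append _ _), ?_, ?_, ?_, ?_⟩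
  · exact suffix_append_of_mem_star (fun u hu => suffix_comp_append_of_mem_rightFactors hp hs hu)
      hI.isSuffix hγ
  · intro γ₁ δ₁ γ₂ δ₂ h₁ h₂
    obtain ⟨δ₁', h₁'⟩ := hinside _ _ h₁
    by_cases hle : γ₂.length + a.length ≤ z.length
    · obtain ⟨δ₂', h₂', -⟩ := exists_eq_append_of_append_eq h₂ (by simpa using hle)
      exact hI.nonCrossing _ _ _ _ h₁' h₂'
    · have hlen := congrArg List.length h₁'
      simp only [List.length_append] at hlen
      omega
  · intro γ₁ δ₁ h
    obtain ⟨δ₁', h'⟩ := hinside _ _ h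
    exact hI.left_mem _ _ h'
  · intro γ₂ δ₂ h
    by_cases hle : γ₂.length + a.length ≤ z.length
    · obtain ⟨δ₂', h', rfl⟩ := exists_eq_append_of_append_eq h (by simpa using hle)
      exact append_mem_star (hI.right_mem _ _ h') hγ
    · -- the reflected occurrence is an `α` in `z` preceded by `‾δ₂`
      obtain ⟨τ, hτ⟩ := comp_prefix_of_length_lt hbar hI.isSuffix h (by simp)
        (by simp only [length_comp]; omega)
      rw [comp_comp hbar] at hτ
      exact (comp_mem_star_leftFactors_iff hbar).1
        (hI.left_mem _ (τ ++ δ) (by rw [hz, ← hτ]; simp))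

theorem of_RH (hbar : Function.Involutive bar) (hp : a <+: w) (hs : comp bar a <:+ w)
    (hI : CompletionInvariant bar a w z) {z' : List S} (h : RH bar a z z') :
    CompletionInvariant bar a w z' ∧ ∃ y ∈ star (rightFactors bar a w), z' = z ++ y := by
  obtain ⟨γ, β, hz, rfl⟩ := h
  have hz' : z = γ ++ a ++ (β ++ comp bar a) := by rw [hz]; simp
  exact ⟨hI.append_comp hbar hp hs hz', _,
    (comp_mem_star_rightFactors_iff hbar).2 (hI.left_mem _ _ hz'), rfl⟩

theorem of_LH (hbar : Function.Involutive bar) (hp : a <+: w) (hs : comp bar a <:+ w)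
    (hI : CompletionInvariant bar a w z) {z' : List S} (h : LH bar a z z') :
    CompletionInvariant bar a w z' ∧ ∃ x ∈ star (leftFactors bar a w), z' = x ++ z := by
  obtain ⟨hI', y, hy, hyz⟩ :=
    (completionInvariant_comp hbar hI).of_RH hbar hp hs (RH_comp_of_LH hbar h)
  refine ⟨by simpa [comp_comp hbar] using completionInvariant_comp hbar hI', comp bar y,
    (comp_mem_star_leftFactors_iff hbar).2 hy, ?_⟩
  simpa [comp_append, comp_comp hbar] using congrArg (comp bar) hyz

end CompletionInvariant

theorem stmt13_general (bar : S → S) (hbar : Function.Involutive bar)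
    (a w : List S)
    (hp : a <+: w) (hs : comp bar a <:+ w)
    (hnc : NonCrossing bar a w) :
    HCstar bar a w ⊆
      { z | ∃ x ∈ star (Pa a w ∪ barSa bar a w),
          ∃ y ∈ star (comp bar '' Pa a w ∪ Sa bar a w), z = x ++ w ++ y } := by
  intro z hz
  suffices CompletionInvariant bar a w z ∧ ∃ x ∈ star (leftFactors bar a w),
      ∃ y ∈ star (rightFactors bar a w), z = x ++ w ++ y from this.2
  induction hz with
  | refl =>
    exact ⟨.self hp hs hnc, [], nil_mem_star _, [], nil_mem_star _, by simp⟩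
  | tail _ hstep ih =>
    obtain ⟨hI, x, hx, y, hy, rfl⟩ := ih
    rcases hstep with hR | hL
    · obtain ⟨hI', y', hy', rfl⟩ := hI.of_RH hbar hp hs hR
      exact ⟨hI', x, hx, y ++ y', append_mem_star hy hy', by simp⟩
    · obtain ⟨hI', x', hx', rfl⟩ := hI.of_LH hbar hp hs hL
      exact ⟨hI', x' ++ x, append_mem_star hx' hx, y, hy, by simp⟩

theorem stmt13 (bar : S → S) (hbar : Function.Involutive bar)
    (a w : List S) (ha : a ≠ comp bar a)
    (hp : a <+: w) (hs : comp bar a <:+ w)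
    (hnc : NonCrossing bar a w) :
    HCstar bar a w ⊆
      { z | ∃ x ∈ star (Pa a w ∪ barSa bar a w),
          ∃ y ∈ star (comp bar '' Pa a w ∪ Sa bar a w), z = x ++ w ++ y } :=
  stmt13_general bar hbar a w hp hs hnc

end Hairpin
end

section
/- Let w ∈ αΣ* ∩ Σ*‾α be a non-α-crossing (m,n)-word with m, n ≥ 2, with α-prefixes u₀ <_p ⋯ <_p u_{m−1} and complemented ‾α-suffixes v₀, …, v_{n−1}. If u₁ ≠ v₁, then for all 1 ≤ i < m and 1 ≤ j < n, the sets H*_α(w‾u_i) and H*_α(v_j w) are disjoint. -/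
open List

namespace Hairpin

variable {S : Type} [DecidableEq S]

/-! Write `‾x` for `comp bar x`. Call `z` anchored at `p` when `p ++ a <+: z`, every nonempty
`a`-prefix `γ` of `z` or of `‾z` satisfies `p ++ a <+: γ ++ a`, and no occurrence of `‾a` in `z`
starts before an occurrence of `a`. Since `u₁` is the shortest nonempty `a`-prefix of `w`, the word
`w ++ ‾uᵢ` is anchored at `u₁`, and hairpin completion preserves this: the last three conditions are
invariant under `‾`, which exchanges right and left completions, and a right completion of such a
word creates no new occurrence of `a`. Symmetrically, the complement of every word of
`H*(vⱼ ++ w)` is anchored at `v₁`. A word in both sets therefore has `u₁ ++ a` and `v₁ ++ a` as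
prefixes of each other, so `u₁ = v₁`. -/

open Function

section

variable {A : Type} {bar : A → A}

@[simp]
lemma comp_append_s17 (x y : List A) : comp bar (x ++ y) = comp bar y ++ comp bar x := by
  simp [comp]

@[simp]
lemma length_comp_s17 (x : List A) : (comp bar x).length = x.length := by
  simp [comp]

@[simp]
lemma comp_comp_s17 (hbar : Involutive bar) (x : List A) : comp bar (comp bar x) = x := by
  simp [comp, hbar.comp_self]

lemma comp_suffix_comp_iff (hbar : Involutive bar) {x y : List A} :
    comp bar x <:+ comp bar y ↔ x <+: y := by
  simp [comp, List.reverse_suffix, List.prefix_map_iff_of_injective hbar.injective]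

lemma prefix_comp_iff (hbar : Involutive bar) {x y : List A} :
    x <+: comp bar y ↔ comp bar x <:+ y := by
  rw [← comp_suffix_comp_iff hbar, comp_comp_s17 hbar]

lemma mem_Pa_comp_iff (hbar : Involutive bar) {a γ w : List A} :
    γ ∈ Pa a (comp bar w) ↔ comp bar γ ∈ Sa bar a w := by
  simp [Pa, Sa, prefix_comp_iff hbar]

lemma nil_mem_Pa {a w : List A} (h : a <+: w) : [] ∈ Pa a w := by
  simpa [Pa] using h

lemma mem_Pa_append_left {a γ y z : List A} (h : γ ∈ Pa a (y ++ z))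
    (hl : γ.length + a.length ≤ y.length) : γ ∈ Pa a y :=
  List.prefix_of_prefix_length_le h (List.prefix_append y z) (by simpa using hl)

lemma mem_Pa_append_right {a γ y z : List A} (h : γ ∈ Pa a (y ++ z))
    (hl : y.length ≤ γ.length) : ∃ γ', γ = y ++ γ' ∧ γ' ∈ Pa a z := by
  obtain ⟨γ', rfl⟩ : y <+: γ :=
    List.prefix_of_prefix_length_le (List.prefix_append y z)
      ((List.prefix_append γ a).trans h) hl
  exact ⟨γ', rfl, (List.prefix_append_right_inj y).1 (by rw [← List.append_assoc]; exact h)⟩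

def OccursBefore (a b z : List A) : Prop :=
  ∀ γ ∈ Pa a z, ∀ δ ∈ Pa b z, γ.length ≤ δ.length

lemma NonCrossing.occursBefore {a z : List A} (h : NonCrossing bar a z) :
    OccursBefore a (comp bar a) z := by
  rintro γ ⟨s, hs⟩ δ ⟨t, ht⟩
  refine h _ _ ⟨s, ?_⟩ ⟨t, ?_⟩
  · rw [← hs, List.append_assoc, List.drop_left]
  · rw [← ht, List.append_assoc, List.drop_left]

lemma occursBefore_comp (hbar : Involutive bar) {a z : List A}
    (h : OccursBefore a (comp bar a) z) : OccursBefore a (comp bar a) (comp bar z) := by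
  intro γ hγ δ hδ
  obtain ⟨P, hP⟩ := (prefix_comp_iff hbar).1 hγ
  obtain ⟨Q, hQ⟩ := (prefix_comp_iff hbar).1 hδ
  simp only [comp_append_s17, comp_comp_s17 hbar] at hP hQ
  have hle := h Q ⟨comp bar δ, by rw [← hQ, List.append_assoc]⟩
    P ⟨comp bar γ, by rw [← hP, List.append_assoc]⟩
  have hP' := congrArg List.length hP
  have hQ' := congrArg List.length hQ
  simp only [List.length_append, length_comp_s17] at hP' hQ'
  omega

def PrefixesExtend (a p z : List A) : Prop :=
  ∀ γ ∈ Pa a z, γ = [] ∨ p ++ a <+: γ ++ a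

lemma prefixesExtend_nil {a z : List A} (h : a <+: z) : PrefixesExtend a [] z :=
  fun _ hγ => Or.inr (List.prefix_of_prefix_length_le h hγ (by simp))

lemma PrefixesExtend.nil {a p z : List A} (hpa : a <+: p ++ a) (h : PrefixesExtend a p z) :
    PrefixesExtend a [] z :=
  fun γ hγ => (h γ hγ).imp_right hpa.trans

lemma prefix_append_append_of_prefix {a p x γ : List A} (hx : p ++ a <+: x ++ a)
    (hγ : a <+: γ ++ a) : p ++ a <+: x ++ γ ++ a := by
  obtain ⟨t, ht⟩ := hγ
  exact hx.trans ⟨t, by rw [List.append_assoc, ht, List.append_assoc]⟩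

structure Balanced (bar : A → A) (a p z : List A) : Prop where
  extend : PrefixesExtend a p z
  extend_comp : PrefixesExtend a p (comp bar z)
  occursBefore : OccursBefore a (comp bar a) z

structure Anchored (bar : A → A) (a p z : List A) : Prop extends Balanced bar a p z where
  mem_Pa : p ∈ Pa a z

lemma balanced_comp (hbar : Involutive bar) {a p z : List A} (h : Balanced bar a p z) :
    Balanced bar a p (comp bar z) :=
  ⟨h.extend_comp, by rw [comp_comp_s17 hbar]; exact h.extend, occursBefore_comp hbar h.occursBefore⟩

lemma Pa_append_comp_subset (hbar : Involutive bar) {a w x : List A} (hs : comp bar a <:+ w)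
    (hx : x ∈ Pa a w) (hb : OccursBefore a (comp bar a) w) : Pa a (w ++ comp bar x) ⊆ Pa a w := by
  intro γ hγ
  obtain ⟨Z, rfl⟩ := hs
  by_cases hl : γ.length + a.length ≤ (Z ++ comp bar a).length
  · exact mem_Pa_append_left hγ hl
  exfalso
  rw [List.append_assoc, ← comp_append_s17] at hγ
  obtain ⟨γ', rfl, hγ'⟩ := mem_Pa_append_right hγ (by simp at hl ⊢; omega)
  -- an occurrence of `a` inside `‾(x ++ a)` is an occurrence of `‾a` inside `x ++ a`
  obtain ⟨R, hR⟩ := (prefix_comp_iff hbar).1 hγ'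
  rw [comp_append_s17] at hR
  have hRx : R ∈ Pa (comp bar a) (x ++ a) := ⟨comp bar γ', by rw [List.append_assoc, hR]⟩
  have hle := hb x hx R (hRx.trans hx)
  have hlen := congrArg List.length hR
  simp only [List.length_append, length_comp_s17] at hlen hl
  omega

lemma balanced_append_comp (hbar : Involutive bar) {a p w x : List A}
    (hw : PrefixesExtend a p w) (hw' : PrefixesExtend a [] (comp bar w))
    (hb : OccursBefore a (comp bar a) w) (hs : comp bar a <:+ w) (hx : x ∈ Pa a w)
    (hxne : x ≠ []) : Balanced bar a p (w ++ comp bar x) where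
  extend γ hγ := hw γ (Pa_append_comp_subset hbar hs hx hb hγ)
  extend_comp := by
    rw [comp_append_s17, comp_comp_s17 hbar]
    intro γ hγ
    have hpx : p ++ a <+: x ++ a := (hw x hx).resolve_left hxne
    by_cases hl : x.length ≤ γ.length
    · obtain ⟨γ', rfl, hγ'⟩ := mem_Pa_append_right hγ hl
      have hγa : a <+: γ' ++ a := by
        rcases hw' γ' hγ' with rfl | h
        · simp
        · simpa using h
      exact Or.inr (prefix_append_append_of_prefix hpx hγa)
    · obtain ⟨Z, rfl⟩ := hs
      rw [comp_append_s17, comp_comp_s17 hbar, ← List.append_assoc] at hγ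
      exact hw γ ((mem_Pa_append_left hγ (by simp; omega)).trans hx)
  occursBefore γ hγ δ hδ := by
    have hγw := Pa_append_comp_subset hbar hs hx hb hγ
    by_cases hl : δ.length + a.length ≤ w.length
    · exact hb γ hγw δ (mem_Pa_append_left hδ (by simpa using hl))
    · have := hγw.length_le
      simp only [List.length_append] at this
      omega

lemma Balanced.append_comp (hbar : Involutive bar) {a p z γ β : List A} (hpa : a <+: p ++ a)
    (h : Balanced bar a p z) (hz : z = γ ++ a ++ β ++ comp bar a) :
    Balanced bar a p (z ++ comp bar γ) := by
  rcases eq_or_ne γ [] with rfl | hγ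
  · simpa [comp] using h
  exact balanced_append_comp hbar h.extend (h.extend_comp.nil hpa) h.occursBefore
    ⟨γ ++ a ++ β, hz.symm⟩ ⟨β ++ comp bar a, by simp [hz]⟩ hγ

lemma Balanced.append_left (hbar : Involutive bar) {a p z γ β : List A} (hpa : a <+: p ++ a)
    (h : Balanced bar a p z) (hz : z = a ++ β ++ comp bar a ++ comp bar γ) :
    Balanced bar a p (γ ++ z) := by
  have := (balanced_comp hbar h).append_comp hbar hpa (γ := γ) (β := comp bar β)
    (by simp [hz, comp_comp_s17 hbar])
  simpa [comp_comp_s17 hbar] using balanced_comp hbar this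

lemma Anchored.of_HC (hbar : Involutive bar) {a p z z' : List A} (hpa : a <+: p ++ a)
    (h : Anchored bar a p z) (hzz' : HC bar a z z') : Anchored bar a p z' := by
  rcases hzz' with ⟨γ, β, rfl, rfl⟩ | ⟨γ, β, rfl, rfl⟩
  · exact ⟨h.append_comp hbar hpa rfl, h.mem_Pa.trans (List.prefix_append _ _)⟩
  refine ⟨h.append_left hbar hpa rfl, ?_⟩
  have hγ : γ ∈ Pa a (comp bar (a ++ β ++ comp bar a ++ comp bar γ)) :=
    ⟨comp bar β ++ comp bar a, by simp [comp_comp_s17 hbar]⟩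
  rcases h.extend_comp γ hγ with rfl | hpγ
  · simpa using h.mem_Pa
  · exact hpγ.trans ((List.prefix_append_right_inj γ).2 (by simp))

lemma Anchored.of_mem_HCstar (hbar : Involutive bar) {a p z z' : List A} (hpa : a <+: p ++ a)
    (h : Anchored bar a p z) (hz' : z' ∈ HCstar bar a z) : Anchored bar a p z' := by
  induction hz' with
  | refl => exact h
  | tail _ hstep ih => exact ih.of_HC hbar hpa hstep

lemma HC.map_comp (hbar : Involutive bar) {a z z' : List A} (h : HC bar a z z') :
    HC bar a (comp bar z) (comp bar z') := by
  rcases h with ⟨γ, β, rfl, rfl⟩ | ⟨γ, β, rfl, rfl⟩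
  · exact Or.inr ⟨γ, comp bar β, by simp [comp_comp_s17 hbar], by simp [comp_comp_s17 hbar]⟩
  · exact Or.inl ⟨γ, comp bar β, by simp [comp_comp_s17 hbar], by simp [comp_comp_s17 hbar]⟩

lemma comp_mem_HCstar (hbar : Involutive bar) {a z z' : List A} (h : z' ∈ HCstar bar a z) :
    comp bar z' ∈ HCstar bar a (comp bar z) := by
  induction h with
  | refl => exact Relation.ReflTransGen.refl
  | tail _ hstep ih => exact ih.tail (hstep.map_comp hbar)

lemma eq_of_anchored (hbar : Involutive bar) {a p q z : List A} (hp : Anchored bar a p z)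
    (hq : Anchored bar a q (comp bar z)) (hp0 : p ≠ []) (hq0 : q ≠ []) : p = q := by
  have hpq : p ++ a <+: q ++ a := (hp.extend_comp q hq.mem_Pa).resolve_left hq0
  have hqp : q ++ a <+: p ++ a :=
    (hq.extend_comp p (by rw [comp_comp_s17 hbar]; exact hp.mem_Pa)).resolve_left hp0
  exact List.append_cancel_right (hpq.eq_of_length (le_antisymm hpq.length_le hqp.length_le))

section Chain

variable {m : ℕ} {u : Fin m → List A}

lemma chain_eq_nil_iff (hu : ∀ i j : Fin m, i < j → u i <+: u j ∧ u i ≠ u j)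
    (hnil : [] ∈ Set.range u) (i : Fin m) : u i = [] ↔ (i : ℕ) = 0 := by
  obtain ⟨l, hl⟩ := hnil
  have hl0 : (l : ℕ) = 0 := by
    by_contra hne
    have h0 := hu ⟨0, by omega⟩ l (Fin.lt_def.2 (by simp; omega))
    rw [hl] at h0
    exact h0.2 (List.prefix_nil.1 h0.1)
  constructor
  · intro hi
    by_contra hne
    exact (hu l i (Fin.lt_def.2 (by omega))).2 (hl.trans hi.symm)
  · intro hi
    rwa [show i = l from Fin.ext (by omega)]

lemma prefixesExtend_of_chain {a w : List A} (hu : ∀ i j : Fin m, i < j → u i <+: u j ∧ u i ≠ u j)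
    (hPu : Pa a w = Set.range u) (hnil : [] ∈ Set.range u) (h1 : 1 < m) :
    PrefixesExtend a (u ⟨1, h1⟩) w := by
  intro γ hγ
  obtain ⟨l, rfl⟩ : γ ∈ Set.range u := hPu ▸ hγ
  rcases Nat.eq_zero_or_pos l with hl | hl
  · exact Or.inl ((chain_eq_nil_iff hu hnil l).2 hl)
  have hlen : (u ⟨1, h1⟩).length ≤ (u l).length := by
    rcases (show 1 = (l : ℕ) ∨ 1 < (l : ℕ) by omega) with h | h
    · rw [show (⟨1, h1⟩ : Fin m) = l from Fin.ext h]
    · exact (hu _ _ (Fin.lt_def.2 h)).1.length_le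
  have h1w : u ⟨1, h1⟩ ∈ Pa a w := hPu ▸ ⟨_, rfl⟩
  exact Or.inr (List.prefix_of_prefix_length_le h1w hγ (by simpa using hlen))

lemma anchored_of_chain (hbar : Involutive bar) {a w z : List A} (hp : a <+: w)
    (hs : comp bar a <:+ w) (hb : OccursBefore a (comp bar a) w)
    (hu : ∀ i j : Fin m, i < j → u i <+: u j ∧ u i ≠ u j) (hPu : Pa a w = Set.range u)
    (h1 : 1 < m) {i : Fin m} (hi : 1 ≤ (i : ℕ)) (hz : z ∈ HCstar bar a (w ++ comp bar (u i))) :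
    Anchored bar a (u ⟨1, h1⟩) z := by
  have hmem (l : Fin m) : u l ∈ Pa a w := hPu ▸ ⟨l, rfl⟩
  have hnil : [] ∈ Set.range u := hPu ▸ nil_mem_Pa hp
  have hpa : a <+: u ⟨1, h1⟩ ++ a := List.prefix_of_prefix_length_le hp (hmem _) (by simp)
  have hbal := balanced_append_comp hbar (prefixesExtend_of_chain hu hPu hnil h1)
    (prefixesExtend_nil ((prefix_comp_iff hbar).2 hs)) hb hs (hmem i)
    (by rw [Ne, chain_eq_nil_iff hu hnil]; omega)
  exact Anchored.of_mem_HCstar hbar hpa ⟨hbal, (hmem _).trans (List.prefix_append _ _)⟩ hz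

end Chain

end

theorem stmt17 (bar : S → S) (hbar : Function.Involutive bar)
    (a w : List S)
    (hp : a <+: w) (hs : comp bar a <:+ w)
    (hnc : NonCrossing bar a w) (m : ℕ) (u : Fin m → List S)
    (huchain : ∀ i j : Fin m, i < j → u i <+: u j ∧ u i ≠ u j)
    (hPu : Pa a w = Set.range u)
    (n : ℕ) (v : Fin n → List S)
    (hvchain : ∀ i j : Fin n, i < j → comp bar (v i) <:+ comp bar (v j) ∧ v i ≠ v j)
    (hSv : Sa bar a w = Set.range (fun i => comp bar (v i)))
    (hm : 2 ≤ m) (hn : 2 ≤ n)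
    (huv : u ⟨1, by omega⟩ ≠ v ⟨1, by omega⟩) :
    ∀ i : Fin m, 1 ≤ (i : ℕ) → ∀ j : Fin n, 1 ≤ (j : ℕ) →
      HCstar bar a (w ++ comp bar (u i)) ∩ HCstar bar a (v j ++ w) = ∅ := by
  intro i hi j hj
  have hv : ∀ i j : Fin n, i < j → v i <+: v j ∧ v i ≠ v j :=
    fun i j h => (hvchain i j h).imp_left (comp_suffix_comp_iff hbar).1
  have hPv : Pa a (comp bar w) = Set.range v := by
    ext γ
    rw [mem_Pa_comp_iff hbar, hSv]
    simp [(show Involutive (comp bar) from comp_comp_s17 hbar).injective.eq_iff]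
  have hb := hnc.occursBefore
  rw [Set.eq_empty_iff_forall_notMem]
  rintro z ⟨hzu, hzv⟩
  have hzu' := anchored_of_chain hbar hp hs hb huchain hPu (by omega) hi hzu
  have hzv' := anchored_of_chain hbar ((prefix_comp_iff hbar).2 hs)
    ((comp_suffix_comp_iff hbar).2 hp) (occursBefore_comp hbar hb) hv hPv (by omega) hj
    (by simpa using comp_mem_HCstar hbar hzv)
  have hnilu : [] ∈ Set.range u := hPu ▸ nil_mem_Pa hp
  have hnilv : [] ∈ Set.range v := hPv ▸ nil_mem_Pa ((prefix_comp_iff hbar).2 hs)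
  exact huv (eq_of_anchored hbar hzu' hzv' ((chain_eq_nil_iff huchain hnilu _).not.2 (by simp))
    ((chain_eq_nil_iff hv hnilv _).not.2 (by simp)))

end Hairpin
end
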